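/- Suppose P is a fully supported probability distribution of (x₁,…,x_M, y) on a finite product space, Q is the product of its marginals, and F is a function such that E_P[F] - log E_Q[e^F] = KL(P‖Q). Then for every (x₁,…,x_M), the conditional distribution satisfies P(y | x₁,…,x_M) = e^{F(x₁,…,x_M,y)} / Σ_{k∈Y} e^{F(x₁,…,x_M,k)}, i.e., the conditional law of y is the softmax of F over the label coordinate, provided the marginal of y under Q is uniform on Y. -/

import Mathlib

/-! When `E_P[F] - log E_Q[e^F] = KL(P‖Q)`, a direct computation gives
`KL(P‖G) = 0` for the Gibbs distribution `G ∝ Q e^F`, so `P = G` by the equality case of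
Gibbs' inequality. Since `Q` factorises and its label factor is constant, `P(x, ·)` is
proportional to `e^{F(x, ·)}`, and normalising over the label gives the softmax. -/

open Finset

/-- Marginal of the i-th modality of a joint distribution on (∀ i, Z i) × Y. -/
noncomputable def margMod {ι : Type*} [Fintype ι] [DecidableEq ι]
    {Z : ι → Type*} [∀ i, Fintype (Z i)] [∀ i, DecidableEq (Z i)]
    {Y : Type*} [Fintype Y]
    (p : ((i : ι) → Z i) × Y → ℝ) (i : ι) (z : Z i) : ℝ :=
  ∑ x : ((i : ι) → Z i) × Y, if x.1 i = z then p x else 0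

/-- Marginal of the label of a joint distribution on (∀ i, Z i) × Y. -/
noncomputable def margLabel {ι : Type*} [Fintype ι] [DecidableEq ι]
    {Z : ι → Type*} [∀ i, Fintype (Z i)] [∀ i, DecidableEq (Z i)]
    {Y : Type*} [Fintype Y] [DecidableEq Y]
    (p : ((i : ι) → Z i) × Y → ℝ) (y : Y) : ℝ :=
  ∑ x : ((i : ι) → Z i) × Y, if x.2 = y then p x else 0

/-- Product of the marginals of a joint distribution on (∀ i, Z i) × Y. -/
noncomputable def prodMarg {ι : Type*} [Fintype ι] [DecidableEq ι]
    {Z : ι → Type*} [∀ i, Fintype (Z i)] [∀ i, DecidableEq (Z i)]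
    {Y : Type*} [Fintype Y] [DecidableEq Y]
    (p : ((i : ι) → Z i) × Y → ℝ) : ((i : ι) → Z i) × Y → ℝ :=
  fun x => (∏ i, margMod p i (x.1 i)) * margLabel p x.2

/-- Total correlation of (z_1, …, z_M, y): the KL divergence between the joint
distribution and the product of its marginals. -/
noncomputable def totalCorr {ι : Type*} [Fintype ι] [DecidableEq ι]
    {Z : ι → Type*} [∀ i, Fintype (Z i)] [∀ i, DecidableEq (Z i)]
    {Y : Type*} [Fintype Y] [DecidableEq Y]
    (p : ((i : ι) → Z i) × Y → ℝ) : ℝ :=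
  ∑ x, p x * Real.log (p x / prodMarg p x)

section Gibbs

open Real InformationTheory

variable {α : Type*} [Fintype α]

theorem eq_of_sum_mul_log_div_eq_zero {p q : α → ℝ} (hp : ∀ x, 0 < p x) (hq : ∀ x, 0 < q x)
    (hsum : ∑ x, p x = ∑ x, q x) (hkl : ∑ x, p x * log (p x / q x) = 0) : p = q := by
  have hterm : ∀ x, q x * klFun (p x / q x) = p x * log (p x / q x) + q x - p x := by
    intro x
    rw [klFun_apply]
    field_simp [(hq x).ne']
  have hnonneg : ∀ x ∈ univ, 0 ≤ q x * klFun (p x / q x) :=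
    fun x _ => mul_nonneg (hq x).le (klFun_nonneg (div_pos (hp x) (hq x)).le)
  have hzero : ∑ x, q x * klFun (p x / q x) = 0 := by
    simp only [hterm, sum_sub_distrib, sum_add_distrib, hkl, hsum, zero_add, sub_self]
  funext x
  have hx := (sum_eq_zero_iff_of_nonneg hnonneg).mp hzero x (mem_univ x)
  rw [mul_eq_zero, or_iff_right (hq x).ne', klFun_eq_zero_iff (div_pos (hp x) (hq x)).le,
    div_eq_one_iff_eq (hq x).ne'] at hx
  exact hx

noncomputable def gibbs (q F : α → ℝ) (x : α) : ℝ :=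
  q x * exp (F x) / ∑ y, q y * exp (F y)

variable [Nonempty α] {p q : α → ℝ} (F : α → ℝ)

theorem sum_mul_exp_pos (hq : ∀ x, 0 < q x) : 0 < ∑ x, q x * exp (F x) :=
  sum_pos (fun x _ => mul_pos (hq x) (exp_pos _)) univ_nonempty

theorem gibbs_pos (hq : ∀ x, 0 < q x) (x : α) : 0 < gibbs q F x :=
  div_pos (mul_pos (hq x) (exp_pos _)) (sum_mul_exp_pos F hq)

theorem sum_gibbs (hq : ∀ x, 0 < q x) : ∑ x, gibbs q F x = 1 := by
  simp only [gibbs]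
  rw [← sum_div, div_self (sum_mul_exp_pos F hq).ne']

theorem sum_mul_log_div_gibbs (hp : ∀ x, 0 < p x) (hq : ∀ x, 0 < q x) (hp1 : ∑ x, p x = 1) :
    ∑ x, p x * log (p x / gibbs q F x)
      = ∑ x, p x * log (p x / q x) - (∑ x, p x * F x - log (∑ x, q x * exp (F x))) := by
  have hZ := sum_mul_exp_pos F hq
  have hlog : ∀ x, log (p x / gibbs q F x)
      = log (p x / q x) - F x + log (∑ y, q y * exp (F y)) := by
    intro x
    rw [gibbs, div_div_eq_mul_div, log_div (mul_pos (hp x) hZ).ne'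
        (mul_pos (hq x) (exp_pos _)).ne', log_mul (hp x).ne' hZ.ne',
      log_mul (hq x).ne' (exp_ne_zero _), log_exp, log_div (hp x).ne' (hq x).ne']
    ring
  simp only [hlog, mul_add, mul_sub, sum_add_distrib, sum_sub_distrib, ← sum_mul, hp1, one_mul]
  ring

theorem eq_gibbs_of_donskerVaradhan_eq (hp : ∀ x, 0 < p x) (hq : ∀ x, 0 < q x)
    (hp1 : ∑ x, p x = 1)
    (htight : ∑ x, p x * F x - log (∑ x, q x * exp (F x)) = ∑ x, p x * log (p x / q x)) :
    p = gibbs q F :=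
  eq_of_sum_mul_log_div_eq_zero hp (gibbs_pos F hq) (by rw [hp1, sum_gibbs F hq])
    (by rw [sum_mul_log_div_gibbs F hp hq hp1, htight, sub_self])

end Gibbs

theorem div_sum_eq_div_sum_of_eq_const_mul {β : Type*} [Fintype β] {a b : β → ℝ} {c : ℝ}
    (hc : c ≠ 0) (h : ∀ k, a k = c * b k) (y : β) : a y / ∑ k, a k = b y / ∑ k, b k := by
  simp only [h, ← mul_sum, mul_div_mul_left _ _ hc]

section Marginals

variable {ι : Type*} [Fintype ι] [DecidableEq ι]
    {Z : ι → Type*} [∀ i, Fintype (Z i)] [∀ i, DecidableEq (Z i)]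
    {Y : Type*} [Fintype Y] [DecidableEq Y] [Nonempty (((i : ι) → Z i) × Y)]
    {p : ((i : ι) → Z i) × Y → ℝ}

omit [DecidableEq Y] in
theorem margMod_pos (hp : ∀ x, 0 < p x) (i : ι) (z : Z i) : 0 < margMod p i z := by
  obtain ⟨xs, y⟩ := ‹Nonempty (((i : ι) → Z i) × Y)›
  refine sum_pos' (fun x _ => ?_) ⟨(Function.update xs i z, y), mem_univ _, ?_⟩
  · split_ifs
    exacts [(hp x).le, le_rfl]
  · simp [hp]

theorem margLabel_pos (hp : ∀ x, 0 < p x) (y : Y) : 0 < margLabel p y := by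
  obtain ⟨xs, _⟩ := ‹Nonempty (((i : ι) → Z i) × Y)›
  refine sum_pos' (fun x _ => ?_) ⟨(xs, y), mem_univ _, ?_⟩
  · split_ifs
    exacts [(hp x).le, le_rfl]
  · simp [hp]

theorem prodMarg_pos (hp : ∀ x, 0 < p x) (x : ((i : ι) → Z i) × Y) : 0 < prodMarg p x :=
  mul_pos (prod_pos fun i _ => margMod_pos hp i _) (margLabel_pos hp _)

end Marginals

/-- If the Donsker–Varadhan bound for F is tight, i.e.
E_P[F] - log E_Q[e^F] = KL(P‖Q) = TC, and the label marginal is uniform, then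
the conditional law of y given (x₁,…,x_M) is the softmax of F over the label. -/
theorem conditional_is_softmax_of_dv_tight {ι : Type*} [Fintype ι] [DecidableEq ι]
    {X : ι → Type*} [∀ i, Fintype (X i)] [∀ i, DecidableEq (X i)]
    {Y : Type*} [Fintype Y] [DecidableEq Y]
    (p : ((i : ι) → X i) × Y → ℝ)
    (hp : ∀ x, 0 < p x) (hp1 : ∑ x, p x = 1)
    (huniform : ∀ y : Y, margLabel p y = 1 / (Fintype.card Y : ℝ))
    (F : ((i : ι) → X i) × Y → ℝ)
    (htight : (∑ x, p x * F x) - Real.log (∑ x, prodMarg p x * Real.exp (F x))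
        = totalCorr p) :
    ∀ (xs : (i : ι) → X i) (y : Y),
      p (xs, y) / ∑ k : Y, p (xs, k)
        = Real.exp (F (xs, y)) / ∑ k : Y, Real.exp (F (xs, k)) := by
  intro xs y
  have : Nonempty (((i : ι) → X i) × Y) := ⟨(xs, y)⟩
  have hgibbs : p = gibbs (prodMarg p) F :=
    eq_gibbs_of_donskerVaradhan_eq F hp (prodMarg_pos hp) hp1 htight
  set c := (∏ i, margMod p i (xs i)) * (1 / (Fintype.card Y : ℝ))
    / ∑ x, prodMarg p x * Real.exp (F x)
  have hprop : ∀ k, p (xs, k) = c * Real.exp (F (xs, k)) := by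
    intro k
    rw [hgibbs, gibbs, prodMarg, huniform]
    ring
  have hc : c ≠ 0 := left_ne_zero_of_mul ((hprop y).symm ▸ (hp (xs, y)).ne')
  exact div_sum_eq_div_sum_of_eq_const_mul hc hprop y
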